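/- arXiv:math/9804015 — 5 statements merged into one kernel-verified Lean document; each statement's English description precedes it below -/
import Mathlib

section
/- Let Γ be a group generated by elements g₁,…,gₙ, let ℤ * Γ be the free product of ℤ with Γ, and let z ∈ ℤ * Γ denote the image of the generator 1 of ℤ. Let Γ̃ be the subgroup of ℤ * Γ generated by zg₁,…,zgₙ, and let H be the subgroup of Γ generated by {gᵢ⁻¹gⱼ : 1 ≤ i,j ≤ n}. If H = Γ, then Γ̃ = ℤ * Γ. -/
open Monoid
open scoped Coprod

/-- If `Γ` is a group generated by `g₁,…,gₙ`, `z` denotes the generator of the `ℤ`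
factor inside the free product `ℤ ∗ Γ`, `Γ̃` is the subgroup of `ℤ ∗ Γ` generated by
`z g₁, …, z gₙ`, and `H` is the subgroup of `Γ` generated by the elements `gᵢ⁻¹ gⱼ`,
then `H = Γ` implies `Γ̃ = ℤ ∗ Γ`. -/
theorem stmt0 (n : ℕ) (hn : 0 < n) (Γ : Type*) [Group Γ] (g : Fin n → Γ)
    (hgen : Subgroup.closure (Set.range g) = ⊤)
    (z : Multiplicative ℤ ∗ Γ)
    (hz : z = Coprod.inl (Multiplicative.ofAdd (1 : ℤ)))
    (Γt : Subgroup (Multiplicative ℤ ∗ Γ))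
    (hΓt : Γt = Subgroup.closure (Set.range fun i => z * Coprod.inr (g i)))
    (H : Subgroup Γ)
    (hH : H = Subgroup.closure (Set.range fun p : Fin n × Fin n => (g p.1)⁻¹ * g p.2))
    (htop : H = ⊤) :
    Γt = ⊤ := by
  have hzg : ∀ i, z * Coprod.inr (g i) ∈ Γt := by
    intro i
    rw [hΓt]
    exact Subgroup.subset_closure ⟨i, rfl⟩
  -- every inr γ is in Γt
  have hinr : ∀ γ : Γ, Coprod.inr γ ∈ Γt := by
    intro γ
    have hγ : γ ∈ H := by rw [htop]; trivial
    rw [hH] at hγ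
    refine Subgroup.closure_induction ?_ (by simpa using Γt.one_mem) (fun a b _ _ ha hb => by
        simpa using Γt.mul_mem ha hb) (fun a _ ha => by simpa using Γt.inv_mem ha) hγ
    rintro a ⟨⟨i, j⟩, rfl⟩
    have : Coprod.inr ((g i)⁻¹ * g j) =
        (z * Coprod.inr (g i))⁻¹ * (z * Coprod.inr (g j)) := by
      simp [mul_assoc]
    rw [this]
    exact Γt.mul_mem (Γt.inv_mem (hzg i)) (hzg j)
  have hzmem : z ∈ Γt := by
    have i0 : Fin n := ⟨0, hn⟩
    have : z = (z * Coprod.inr (g i0)) * (Coprod.inr (g i0))⁻¹ := by group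
    rw [this]
    exact Γt.mul_mem (hzg i0) (Γt.inv_mem (hinr (g i0)))
  have hinl : ∀ m : Multiplicative ℤ, Coprod.inl m ∈ Γt := by
    intro m
    have : (Coprod.inl m : Multiplicative ℤ ∗ Γ) = z ^ (Multiplicative.toAdd m) := by
      rw [hz, ← MonoidHom.map_zpow]
      congr 1
      simp [← ofAdd_zsmul]
    rw [this]
    exact Γt.zpow_mem hzmem _
  rw [eq_top_iff, ← Coprod.closure_range_inl_union_inr, Subgroup.closure_le]
  rintro x (⟨m, rfl⟩ | ⟨γ, rfl⟩)
  · exact hinl m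
  · exact hinr γ
end

section
/- Let Γ be a group generated by elements g₁,…,gₙ, let z ∈ ℤ * Γ denote the image of the generator 1 of ℤ, let Γ̃ be the subgroup of ℤ * Γ generated by zg₁,…,zgₙ, and let H be the subgroup of Γ generated by {gᵢ⁻¹gⱼ : 1 ≤ i,j ≤ n}. If H ≠ Γ, then the group homomorphism φ : ℤ * H → ℤ * Γ determined by sending the generator 1 of ℤ to z·g₁ and each h ∈ H to itself (under the canonical inclusion H ≤ Γ ≤ ℤ * Γ) is injective and has image Γ̃. In particular, Γ̃ is isomorphic to ℤ * H via an isomorphism sending zg₁ to the generator of ℤ and zgᵢ to g₁⁻¹gᵢ for i = 2,…,n. -/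
/-!
Writing `z` for the generator of `ℤ`, the endomorphism `twist g` of `ℤ ∗ Γ` with `z ↦ z g` and
`γ ↦ γ` is an automorphism (its inverse is `twist g⁻¹`), and `φ = twist g₁ ∘ (ℤ ∗ H ↪ ℤ ∗ Γ)`.
A free product of injective homomorphisms is injective, since it maps reduced words letter by
letter to reduced words. The image of `φ` is generated by `z g₁` and the `gᵢ⁻¹ gⱼ`; as
`gᵢ⁻¹ gⱼ = (z gᵢ)⁻¹ (z gⱼ)` and `z gᵢ = z g₁ · g₁⁻¹ gᵢ`, this is the subgroup generated by
the `z gᵢ`.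
-/

open Monoid
open scoped Coprod

namespace Monoid.CoprodI

variable {ι : Type*} {M N : ι → Type*} [∀ i, Monoid (M i)] [∀ i, Monoid (N i)]

def Word.map (f : ∀ i, M i →* N i) (hf : ∀ i, Function.Injective (f i)) (w : Word M) :
    Word N where
  toList := w.toList.map fun l => ⟨l.1, f l.1 l.2⟩
  ne_one := by
    simp only [List.mem_map]
    rintro _ ⟨l, hl, rfl⟩
    exact (map_ne_one_iff (f l.1) (hf l.1)).mpr (w.ne_one l hl)
  chain_ne := (List.isChain_map _).mpr w.chain_ne

theorem Word.prod_map (f : ∀ i, M i →* N i) (hf : ∀ i, Function.Injective (f i))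
    (w : Word M) : (w.map f hf).prod = lift (fun i => of.comp (f i)) w.prod := by
  simp [Word.prod, Word.map, map_list_prod, Function.comp_def]

theorem Word.map_injective (f : ∀ i, M i →* N i) (hf : ∀ i, Function.Injective (f i)) :
    Function.Injective (Word.map f hf) := by
  intro v w hvw
  ext1
  refine List.map_injective_iff.mpr ?_ (congrArg Word.toList hvw)
  rintro ⟨i, m⟩ ⟨j, m'⟩ h
  simp only [Sigma.mk.injEq] at h
  obtain ⟨rfl, h⟩ := h
  rw [hf i (eq_of_heq h)]

theorem lift_of_comp_injective {f : ∀ i, M i →* N i} (hf : ∀ i, Function.Injective (f i)) :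
    Function.Injective (lift fun i => of.comp (f i)) := by
  classical
  have hsquare : (lift fun i => of.comp (f i)) ∘ Word.equiv.symm =
      Word.equiv.symm ∘ Word.map f hf :=
    funext fun w => (Word.prod_map f hf w).symm
  refine Function.Injective.of_comp_right ?_ Word.equiv.symm.surjective
  rw [hsquare]
  exact Word.equiv.symm.injective.comp (Word.map_injective f hf)

end Monoid.CoprodI

namespace Monoid.Coprod

universe u v u' v'

/-- The indexed coproduct over `Bool` needs both summands of `M ∗ N` in one universe. -/
def boolFamily (M : Type u) (N : Type v) : Bool → Type (max u v)
  | true => ULift.{v} M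
  | false => ULift.{u} N

variable {M : Type u} {N : Type v} {M' : Type u'} {N' : Type v'}
  [Monoid M] [Monoid N] [Monoid M'] [Monoid N']

instance : ∀ b, Monoid (boolFamily M N b)
  | true => inferInstanceAs (Monoid (ULift M))
  | false => inferInstanceAs (Monoid (ULift N))

def toCoprodI : M ∗ N →* CoprodI (boolFamily M N) :=
  lift (CoprodI.of.comp (MulEquiv.ulift.symm.toMonoidHom : M →* boolFamily M N true))
    (CoprodI.of.comp (MulEquiv.ulift.symm.toMonoidHom : N →* boolFamily M N false))

def ofCoprodI : CoprodI (boolFamily M N) →* M ∗ N :=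
  CoprodI.lift fun
    | true => inl.comp MulEquiv.ulift.toMonoidHom
    | false => inr.comp MulEquiv.ulift.toMonoidHom

theorem ofCoprodI_comp_toCoprodI : ofCoprodI.comp toCoprodI = MonoidHom.id (M ∗ N) :=
  hom_ext (by ext; rfl) (by ext; rfl)

theorem toCoprodI_injective : Function.Injective (toCoprodI : M ∗ N →* _) :=
  Function.LeftInverse.injective (g := ofCoprodI) (DFunLike.congr_fun ofCoprodI_comp_toCoprodI)

def boolFamilyMap (f : M →* M') (g : N →* N') : ∀ b, boolFamily M N b →* boolFamily M' N' b
  | true => MulEquiv.ulift.symm.toMonoidHom.comp (f.comp MulEquiv.ulift.toMonoidHom)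
  | false => MulEquiv.ulift.symm.toMonoidHom.comp (g.comp MulEquiv.ulift.toMonoidHom)

theorem toCoprodI_comp_map (f : M →* M') (g : N →* N') :
    toCoprodI.comp (map f g) =
      (CoprodI.lift fun b => CoprodI.of.comp (boolFamilyMap f g b)).comp toCoprodI :=
  hom_ext (by ext; rfl) (by ext; rfl)

theorem map_injective {f : M →* M'} {g : N →* N'} (hf : Function.Injective f)
    (hg : Function.Injective g) : Function.Injective (map f g) := by
  have hfg : ∀ b, Function.Injective (boolFamilyMap f g b)
    | true => MulEquiv.ulift.symm.injective.comp (hf.comp MulEquiv.ulift.injective)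
    | false => MulEquiv.ulift.symm.injective.comp (hg.comp MulEquiv.ulift.injective)
  refine Function.Injective.of_comp (f := toCoprodI) ?_
  rw [← MonoidHom.coe_comp, toCoprodI_comp_map, MonoidHom.coe_comp]
  exact (CoprodI.lift_of_comp_injective hfg).comp toCoprodI_injective

variable {G : Type*} [Group G]

def twist (g : G) : Multiplicative ℤ ∗ G →* Multiplicative ℤ ∗ G :=
  lift (zpowersHom _ (inl (.ofAdd 1) * inr g)) inr

theorem twist_comp_twist (g h : G) : (twist g).comp (twist h) = twist (g * h) :=
  hom_ext (by ext; simp [twist, mul_assoc]) rfl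

theorem twist_one : twist (1 : G) = MonoidHom.id _ :=
  hom_ext (by ext; simp [twist]) rfl

theorem twist_injective (g : G) : Function.Injective (twist g) := by
  refine Function.LeftInverse.injective (g := twist g⁻¹) fun x => ?_
  rw [← MonoidHom.comp_apply, twist_comp_twist, inv_mul_cancel, twist_one, MonoidHom.id_apply]

end Monoid.Coprod

namespace Subgroup

theorem closure_range_eq_zpowers_sup_closure_range_inv_mul {G ι : Type*} [Group G]
    (x : ι → G) (i₀ : ι) :
    closure (Set.range x) =
      zpowers (x i₀) ⊔ closure (Set.range fun p : ι × ι => (x p.1)⁻¹ * x p.2) := by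
  have hx : ∀ i, x i ∈ closure (Set.range x) := fun i => subset_closure ⟨i, rfl⟩
  refine le_antisymm ((closure_le _).mpr ?_) (sup_le ?_ ?_)
  · rintro _ ⟨i, rfl⟩
    rw [← mul_inv_cancel_left (x i₀) (x i)]
    exact mul_mem (mem_sup_left (mem_zpowers _)) (mem_sup_right (subset_closure ⟨(i₀, i), rfl⟩))
  · exact (zpowers_le).mpr (hx i₀)
  · exact (closure_le _).mpr (by rintro _ ⟨⟨i, j⟩, rfl⟩; exact mul_mem (inv_mem (hx i)) (hx j))

end Subgroup

open Monoid.Coprod in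
theorem stmt1_general (n : ℕ) (hn : 0 < n) (Γ : Type*) [Group Γ] (g : Fin n → Γ)
    (z : Multiplicative ℤ ∗ Γ)
    (hz : z = Coprod.inl (Multiplicative.ofAdd (1 : ℤ)))
    (Γt : Subgroup (Multiplicative ℤ ∗ Γ))
    (hΓt : Γt = Subgroup.closure (Set.range fun i => z * Coprod.inr (g i)))
    (H : Subgroup Γ)
    (hH : H = Subgroup.closure (Set.range fun p : Fin n × Fin n => (g p.1)⁻¹ * g p.2))
    (φ : Multiplicative ℤ ∗ H →* Multiplicative ℤ ∗ Γ)
    (hφ : φ = Coprod.lift (zpowersHom (Multiplicative ℤ ∗ Γ) (z * Coprod.inr (g ⟨0, hn⟩)))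
      ((Coprod.inr : Γ →* Multiplicative ℤ ∗ Γ).comp H.subtype)) :
    Function.Injective φ ∧ φ.range = Γt := by
  subst hz hφ hΓt
  constructor
  · have hfactor :
        lift (zpowersHom _ (inl (.ofAdd 1) * inr (g ⟨0, hn⟩))) (inr.comp H.subtype) =
          (twist (g ⟨0, hn⟩)).comp (map (MonoidHom.id _) H.subtype) :=
      hom_ext (by ext; simp [twist]) rfl
    rw [hfactor]
    exact (twist_injective _).comp (map_injective Function.injective_id H.subtype_injective)
  · rw [Coprod.range_lift, Subgroup.range_zpowersHom, MonoidHom.range_comp, H.range_subtype, hH,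
      MonoidHom.map_closure,
      Subgroup.closure_range_eq_zpowers_sup_closure_range_inv_mul _ ⟨0, hn⟩, ← Set.range_comp]
    congr 3
    ext p
    simp

/-- Let `Γ` be generated by `g₁,…,gₙ`, `z` the generator of the `ℤ` factor of `ℤ ∗ Γ`,
`Γ̃ ≤ ℤ ∗ Γ` the subgroup generated by `z g₁, …, z gₙ`, and `H ≤ Γ` the subgroup
generated by the `gᵢ⁻¹ gⱼ`.  If `H ≠ Γ`, then the homomorphism
`φ : ℤ ∗ H →* ℤ ∗ Γ` sending the generator of `ℤ` to `z g₁` and each `h ∈ H` to itself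
is injective with image `Γ̃`; in particular `Γ̃ ≅ ℤ ∗ H`. -/
theorem stmt1 (n : ℕ) (hn : 0 < n) (Γ : Type*) [Group Γ] (g : Fin n → Γ)
    (hgen : Subgroup.closure (Set.range g) = ⊤)
    (z : Multiplicative ℤ ∗ Γ)
    (hz : z = Coprod.inl (Multiplicative.ofAdd (1 : ℤ)))
    (Γt : Subgroup (Multiplicative ℤ ∗ Γ))
    (hΓt : Γt = Subgroup.closure (Set.range fun i => z * Coprod.inr (g i)))
    (H : Subgroup Γ)
    (hH : H = Subgroup.closure (Set.range fun p : Fin n × Fin n => (g p.1)⁻¹ * g p.2))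
    (hne : H ≠ ⊤)
    (φ : Multiplicative ℤ ∗ H →* Multiplicative ℤ ∗ Γ)
    (hφ : φ = Coprod.lift (zpowersHom (Multiplicative ℤ ∗ Γ) (z * Coprod.inr (g ⟨0, hn⟩)))
      ((Coprod.inr : Γ →* Multiplicative ℤ ∗ Γ).comp H.subtype)) :
    Function.Injective φ ∧ φ.range = Γt :=
  stmt1_general n hn Γ g z hz Γt hΓt H hH φ hφ
end

section
/- Let H be a complex Hilbert space, n ≥ 1, and let u be a unitary element of Mₙ(B(H)), with entries u_{ij} ∈ B(H). Let (ξ_k) be a sequence of unit vectors in H such that ⟨(Σᵢ (1 − Re(u_{ii})))ξ_k, ξ_k⟩ → 0 as k → ∞. Then for all i, j one has ‖u_{ij} ξ_k − δ_{ij} ξ_k‖ → 0 as k → ∞ (where δ_{ij} ξ_k means ξ_k if i = j and 0 if i ≠ j). -/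
/-!
Because `∑ᵢ uᵢⱼ* uᵢⱼ = 1`, the `j`-th column of `u` is an isometry, and expanding the squares gives
`∑ᵢ ‖uᵢⱼ x - δᵢⱼ x‖² = 2 (‖x‖² - Re ⟨uⱼⱼ x, x⟩)`.
So the numbers `‖ξₖ‖² - Re ⟨uⱼⱼ ξₖ, ξₖ⟩` are nonnegative; their sum over `j` is the real part of the
quantity assumed to tend to `0`, so each of them tends to `0`, and each one bounds
`‖uᵢⱼ ξₖ - δᵢⱼ ξₖ‖²` for every `i`.
-/

open Filter Topology RCLike ContinuousLinearMap

theorem tendsto_nhds_zero_of_sum_of_nonneg {ι α : Type*} [Fintype ι] {l : Filter α}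
    {f : ι → α → ℝ} (hf : ∀ i a, 0 ≤ f i a) (h : Tendsto (fun a => ∑ i, f i a) l (𝓝 0)) (i : ι) :
    Tendsto (f i) l (𝓝 0) :=
  squeeze_zero (hf i) (fun a => Finset.single_le_sum (fun j _ => hf j a) (Finset.mem_univ i)) h

section

variable {𝕜 E : Type*} [RCLike 𝕜] [NormedAddCommGroup E] [InnerProductSpace 𝕜 E] [CompleteSpace E]

theorem re_inner_one_sub_half_add_adjoint_apply_self (a : E →L[𝕜] E) (x : E) :
    re (inner 𝕜 ((1 - (2 : 𝕜)⁻¹ • (a + adjoint a)) x) x) = ‖x‖ ^ 2 - re (inner 𝕜 (a x) x) := by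
  rw [sub_apply, one_apply_eq_self, inner_sub_left, inner_self_eq_norm_sq_to_K, smul_apply,
    add_apply, inner_smul_left, inner_add_left, adjoint_inner_left, ← inner_conj_symm x (a x),
    add_conj, map_inv₀, map_ofNat, inv_mul_cancel_left₀ two_ne_zero]
  simp

variable {ι : Type*} [Fintype ι] [DecidableEq ι] {u : Matrix ι ι (E →L[𝕜] E)}

theorem sum_norm_sq_apply_of_mem_unitary (hu : u ∈ unitary (Matrix ι ι (E →L[𝕜] E)))
    (j : ι) (x : E) : ∑ i, ‖u i j x‖ ^ 2 = ‖x‖ ^ 2 := by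
  have hcol : ∑ i, adjoint (u i j) * u i j = 1 := by
    simpa [Matrix.mul_apply, star_eq_adjoint] using
      congr_arg (fun m => m j j) (Unitary.star_mul_self_of_mem hu)
  calc ∑ i, ‖u i j x‖ ^ 2 = re (inner 𝕜 ((∑ i, adjoint (u i j) * u i j) x) x) := by
        simp only [apply_norm_sq_eq_inner_adjoint_left, sum_apply, sum_inner, map_sum]
        rfl
    _ = ‖x‖ ^ 2 := by rw [hcol, one_apply_eq_self, inner_self_eq_norm_sq]

theorem sum_norm_sq_apply_sub_ite_of_mem_unitary (hu : u ∈ unitary (Matrix ι ι (E →L[𝕜] E)))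
    (j : ι) (x : E) :
    ∑ i, ‖u i j x - (if i = j then x else 0)‖ ^ 2 = 2 * (‖x‖ ^ 2 - re (inner 𝕜 (u j j x) x)) := by
  have hterm (i : ι) : ‖u i j x - (if i = j then x else 0)‖ ^ 2
      = ‖u i j x‖ ^ 2 - (if i = j then 2 * re (inner 𝕜 (u j j x) x) - ‖x‖ ^ 2 else 0) := by
    split_ifs with hij
    · subst hij
      rw [norm_sub_sq (𝕜 := 𝕜)]
      ring
    · simp
  simp only [hterm, Finset.sum_sub_distrib, Finset.sum_ite_eq', Finset.mem_univ, if_true,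
    sum_norm_sq_apply_of_mem_unitary hu]
  ring

end

theorem stmt5_general {H : Type*} [NormedAddCommGroup H] [InnerProductSpace ℂ H] [CompleteSpace H]
    (n : ℕ) (u : Matrix (Fin n) (Fin n) (H →L[ℂ] H))
    (hu : u ∈ unitary (Matrix (Fin n) (Fin n) (H →L[ℂ] H)))
    (ξ : ℕ → H)
    (hconv : Tendsto
      (fun k => (inner ℂ
        ((∑ i, ((1 : H →L[ℂ] H) -
            (2 : ℂ)⁻¹ • (u i i + ContinuousLinearMap.adjoint (u i i)))) (ξ k)) (ξ k) : ℂ))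
      atTop (𝓝 0)) :
    ∀ i j, Tendsto (fun k => ‖u i j (ξ k) - (if i = j then ξ k else 0)‖) atTop (𝓝 0) := by
  set t : Fin n → ℕ → ℝ := fun j k => ‖ξ k‖ ^ 2 - re (inner ℂ (u j j (ξ k)) (ξ k))
  have hcol (j : Fin n) (k : ℕ) :
      ∑ i, ‖u i j (ξ k) - (if i = j then ξ k else 0)‖ ^ 2 = 2 * t j k :=
    sum_norm_sq_apply_sub_ite_of_mem_unitary hu j (ξ k)
  have ht_nonneg (j : Fin n) (k : ℕ) : 0 ≤ t j k :=
    nonneg_of_mul_nonneg_right (hcol j k ▸ Finset.sum_nonneg fun _ _ => sq_nonneg _) two_pos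
  have ht_sum : Tendsto (fun k => ∑ j, t j k) atTop (𝓝 0) := by
    have := (continuous_re.tendsto 0).comp hconv
    simp only [Function.comp_def, sum_apply, sum_inner, map_sum, map_zero,
      re_inner_one_sub_half_add_adjoint_apply_self] at this
    exact this
  intro i j
  have h2t : Tendsto (fun k => √(2 * t j k)) atTop (𝓝 0) := by
    simpa using ((tendsto_nhds_zero_of_sum_of_nonneg ht_nonneg ht_sum j).const_mul 2).sqrt
  refine squeeze_zero (fun k => norm_nonneg _) (fun k => ?_) h2t
  rw [Real.le_sqrt (norm_nonneg _) (mul_nonneg zero_le_two (ht_nonneg j k)), ← hcol]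
  exact Finset.single_le_sum (f := fun i => ‖u i j (ξ k) - (if i = j then ξ k else 0)‖ ^ 2)
    (fun _ _ => sq_nonneg _) (Finset.mem_univ i)

/-- Let `u` be a unitary `n × n` matrix of bounded operators on a complex Hilbert space `H`
and let `(ξ_k)` be a sequence of unit vectors with
`⟨(Σᵢ (1 - Re uᵢᵢ))ξ_k, ξ_k⟩ → 0`.  Then `‖uᵢⱼ ξ_k - δᵢⱼ ξ_k‖ → 0` for all `i, j`. -/
theorem stmt5 {H : Type*} [NormedAddCommGroup H] [InnerProductSpace ℂ H] [CompleteSpace H]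
    (n : ℕ) (hn : 0 < n) (u : Matrix (Fin n) (Fin n) (H →L[ℂ] H))
    (hu : u ∈ unitary (Matrix (Fin n) (Fin n) (H →L[ℂ] H)))
    (ξ : ℕ → H) (hξ : ∀ k, ‖ξ k‖ = 1)
    (hconv : Tendsto
      (fun k => (inner ℂ
        ((∑ i, ((1 : H →L[ℂ] H) -
            (2 : ℂ)⁻¹ • (u i i + ContinuousLinearMap.adjoint (u i i)))) (ξ k)) (ξ k) : ℂ))
      atTop (𝓝 0)) :
    ∀ i j, Tendsto (fun k => ‖u i j (ξ k) - (if i = j then ξ k else 0)‖) atTop (𝓝 0) :=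
  stmt5_general n u hu ξ hconv
end

section
/- Let n ≥ 1, λ > 0, and let E, F be n×n complex matrices with ‖vec(E)‖ = ‖vec(Fᵗ)‖ = 1 (equivalently Tr(E*E) = Tr(F*F) = 1). Let e be the orthogonal projection of ℂⁿ ⊗ ℂⁿ onto ℂ·vec(E) and f the orthogonal projection of ℂⁿ ⊗ ℂⁿ onto ℂ·vec(Fᵗ). If the Jones relation (id_{ℂⁿ} ⊗ f)(e ⊗ id_{ℂⁿ})(id_{ℂⁿ} ⊗ f) = λ·(id_{ℂⁿ} ⊗ f) holds as operators on ℂⁿ ⊗ ℂⁿ ⊗ ℂⁿ, then (F*F)(E*E) = λ·Iₙ; in particular E and F are invertible. -/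
open Matrix
open scoped Kronecker ComplexOrder

noncomputable section

/-- The orthogonal projection of `ℓ²(ι)` onto the line `ℂ·x`, written as a matrix:
for a unit vector `x` it is `x ↦ x p * conj (x q)`; in general one divides by `‖x‖²`. -/
def lineProj {ι : Type*} [Fintype ι] (x : ι → ℂ) : Matrix ι ι ℂ :=
  (∑ p, x p * star (x p))⁻¹ • Matrix.of fun p q => x p * star (x q)

/-- `e ⊗ id` as an operator (matrix) on `ℂⁿ ⊗ ℂⁿ ⊗ ℂⁿ`, identified with
`EuclideanSpace ℂ (Fin n × Fin n × Fin n)` via the standard bases. -/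
def tensorOne (n : ℕ) (e : Matrix (Fin n × Fin n) (Fin n × Fin n) ℂ) :
    Matrix (Fin n × Fin n × Fin n) (Fin n × Fin n × Fin n) ℂ :=
  Matrix.reindex (Equiv.prodAssoc _ _ _) (Equiv.prodAssoc _ _ _)
    (e ⊗ₖ (1 : Matrix (Fin n) (Fin n) ℂ))

/-- `id ⊗ f` as an operator (matrix) on `ℂⁿ ⊗ ℂⁿ ⊗ ℂⁿ`. -/
def oneTensor (n : ℕ) (f : Matrix (Fin n × Fin n) (Fin n × Fin n) ℂ) :
    Matrix (Fin n × Fin n × Fin n) (Fin n × Fin n × Fin n) ℂ :=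
  (1 : Matrix (Fin n) (Fin n) ℂ) ⊗ₖ f

lemma sum_eq_trace {n : ℕ} (M : Matrix (Fin n) (Fin n) ℂ) :
    (∑ p : Fin n × Fin n, M p.1 p.2 * star (M p.1 p.2)) = Matrix.trace (Mᴴ * M) := by
  simp [Matrix.trace, Matrix.mul_apply, Fintype.sum_prod_type, Matrix.conjTranspose_apply,
    Matrix.diag]
  rw [Finset.sum_comm]
  simp [mul_comm]

lemma jones_entry {n : ℕ} (E F : Matrix (Fin n) (Fin n) ℂ)
    (hE1 : (∑ p : Fin n × Fin n, E p.1 p.2 * star (E p.1 p.2)) = 1)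
    (hF1 : (∑ p : Fin n × Fin n, Fᵀ p.1 p.2 * star (Fᵀ p.1 p.2)) = 1)
    (i j a k l b : Fin n) :
    (oneTensor n (lineProj fun p => Fᵀ p.1 p.2) *
        tensorOne n (lineProj fun p => E p.1 p.2) *
        oneTensor n (lineProj fun p => Fᵀ p.1 p.2)) (i,j,a) (k,l,b) =
      (E * Fᴴ * F * Eᴴ) i k * (F a j * star (F b l)) := by
  simp only [lineProj, hE1, hF1, inv_one, one_smul]
  simp [oneTensor, tensorOne, Matrix.mul_apply, Fintype.sum_prod_type, Matrix.one_apply,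
    Matrix.conjTranspose_apply, mul_ite, ite_mul, mul_zero, zero_mul, Finset.sum_ite_eq,
    Finset.mul_sum, Finset.sum_mul]
  exact Finset.sum_congr rfl fun x _ => Finset.sum_congr rfl fun y _ =>
    Finset.sum_congr rfl fun z _ => by ring

/-- Let `E, F` be `n × n` complex matrices with `Tr(E*E) = Tr(F*F) = 1`, let `e` be the
orthogonal projection of `ℂⁿ ⊗ ℂⁿ` onto `ℂ·vec E` and `f` that onto `ℂ·vec Fᵗ`.  If the
Jones relation `(id ⊗ f)(e ⊗ id)(id ⊗ f) = λ (id ⊗ f)` holds, then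
`(F*F)(E*E) = λ·1`; in particular `E` and `F` are invertible. -/
theorem stmt11 (n : ℕ) (hn : 0 < n) (lam : ℝ) (hlam : 0 < lam)
    (E F : Matrix (Fin n) (Fin n) ℂ)
    (hE : Matrix.trace (Eᴴ * E) = 1) (hF : Matrix.trace (Fᴴ * F) = 1)
    (hJones :
      oneTensor n (lineProj fun p => Fᵀ p.1 p.2) *
          tensorOne n (lineProj fun p => E p.1 p.2) *
          oneTensor n (lineProj fun p => Fᵀ p.1 p.2) =
        (lam : ℂ) • oneTensor n (lineProj fun p => Fᵀ p.1 p.2)) :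
    Fᴴ * F * (Eᴴ * E) = (lam : ℂ) • (1 : Matrix (Fin n) (Fin n) ℂ) ∧
      IsUnit E ∧ IsUnit F := by
  have hlam' : (lam : ℂ) ≠ 0 := by exact_mod_cast hlam.ne'
  have hE1 : (∑ p : Fin n × Fin n, E p.1 p.2 * star (E p.1 p.2)) = 1 := by
    rw [sum_eq_trace, hE]
  have hF1 : (∑ p : Fin n × Fin n, Fᵀ p.1 p.2 * star (Fᵀ p.1 p.2)) = 1 := by
    rw [show (∑ p : Fin n × Fin n, Fᵀ p.1 p.2 * star (Fᵀ p.1 p.2))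
        = Matrix.trace (Fᴴ * F) from ?_, hF]
    simp [Matrix.trace, Matrix.mul_apply, Fintype.sum_prod_type, Matrix.conjTranspose_apply,
      Matrix.diag, mul_comm]
  -- F is nonzero
  have hFne : ∃ a j, F a j ≠ 0 := by
    by_contra h
    push_neg at h
    have : F = 0 := by ext a j; exact h a j
    simp [this] at hF
  obtain ⟨a0, j0, h0⟩ := hFne
  have hmod : F a0 j0 * star (F a0 j0) ≠ 0 := by
    simp [h0]
  -- key identity
  have key : E * Fᴴ * F * Eᴴ = (lam : ℂ) • (1 : Matrix (Fin n) (Fin n) ℂ) := by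
    ext i k
    have h := congrFun (congrFun hJones (i, j0, a0)) (k, j0, a0)
    rw [jones_entry E F hE1 hF1] at h
    have hrhs : ((lam : ℂ) • oneTensor n (lineProj fun p => Fᵀ p.1 p.2)) (i,j0,a0) (k,j0,a0)
        = ((lam : ℂ) • (1 : Matrix (Fin n) (Fin n) ℂ)) i k * (F a0 j0 * star (F a0 j0)) := by
      simp only [lineProj, hF1, inv_one, one_smul]
      simp [oneTensor, Matrix.one_apply, Matrix.smul_apply, mul_ite, ite_mul]
    rw [hrhs] at h
    exact mul_right_cancel₀ hmod h
  -- invertibility of E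
  have hErinv : E * ((lam : ℂ)⁻¹ • (Fᴴ * F * Eᴴ)) = 1 := by
    rw [Matrix.mul_smul]
    have : E * (Fᴴ * F * Eᴴ) = (lam : ℂ) • 1 := by
      rw [← key]; noncomm_ring
    rw [this, smul_smul, inv_mul_cancel₀ hlam', one_smul]
  have hEunit : IsUnit E := by
    have := invertibleOfRightInverse _ _ hErinv
    exact isUnit_of_invertible E
  -- left inverse too
  have hElinv : ((lam : ℂ)⁻¹ • (Fᴴ * F * Eᴴ)) * E = 1 :=
    mul_eq_one_comm.mp hErinv
  have main : Fᴴ * F * (Eᴴ * E) = (lam : ℂ) • (1 : Matrix (Fin n) (Fin n) ℂ) := by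
    have h2 : (lam : ℂ) • (((lam : ℂ)⁻¹ • (Fᴴ * F * Eᴴ)) * E) = (lam : ℂ) • (1 : Matrix (Fin n) (Fin n) ℂ) := by
      rw [hElinv]
    rw [Matrix.smul_mul, smul_smul, mul_inv_cancel₀ hlam', one_smul] at h2
    rw [mul_assoc] at h2
    exact h2
  refine ⟨main, hEunit, ?_⟩
  -- F unit
  have hFrinv : Fᴴ * (F * ((lam : ℂ)⁻¹ • (Eᴴ * E))) = 1 := by
    have h3 : Fᴴ * (F * (Eᴴ * E)) = (lam : ℂ) • 1 := by rw [← mul_assoc]; exact main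
    rw [Matrix.mul_smul, Matrix.mul_smul, h3, smul_smul, inv_mul_cancel₀ hlam', one_smul]
  have hFhunit : IsUnit Fᴴ := by
    have := invertibleOfRightInverse _ _ hFrinv
    exact isUnit_of_invertible _
  rw [Matrix.isUnit_iff_isUnit_det] at hFhunit ⊢
  rwa [Matrix.det_conjTranspose, isUnit_star] at hFhunit
end
end

section
/- Let n ≥ 1, λ > 0, and let Q be a positive definite n×n complex matrix with Tr(Q²) = Tr(Q⁻²) = λ^{−1/2}. Let e be the orthogonal projection of ℂⁿ ⊗ ℂⁿ onto ℂ·vec(Q) and f the orthogonal projection of ℂⁿ ⊗ ℂⁿ onto ℂ·vec((Q⁻¹)ᵗ). Then on ℂⁿ ⊗ ℂⁿ ⊗ ℂⁿ the Temperley–Lieb–Jones relations hold: (e ⊗ id)(id ⊗ f)(e ⊗ id) = λ·(e ⊗ id) and (id ⊗ f)(e ⊗ id)(id ⊗ f) = λ·(id ⊗ f). -/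
open Matrix
open scoped Kronecker ComplexOrder

noncomputable section

lemma tensorOne_apply (n : ℕ) (e : Matrix (Fin n × Fin n) (Fin n × Fin n) ℂ)
    (x y : Fin n × Fin n × Fin n) :
    tensorOne n e x y = e (x.1, x.2.1) (y.1, y.2.1) * (if x.2.2 = y.2.2 then 1 else 0) := by
  obtain ⟨a, b, c⟩ := x; obtain ⟨d, e', f⟩ := y
  simp [tensorOne, Matrix.one_apply, Equiv.prodAssoc]

lemma oneTensor_apply (n : ℕ) (f : Matrix (Fin n × Fin n) (Fin n × Fin n) ℂ)
    (x y : Fin n × Fin n × Fin n) :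
    oneTensor n f x y = (if x.1 = y.1 then 1 else 0) * f x.2 y.2 := by
  obtain ⟨a, b, c⟩ := x; obtain ⟨d, e', g⟩ := y
  simp [oneTensor, Matrix.one_apply]

lemma tensorOne_smul (n : ℕ) (c : ℂ) (e : Matrix (Fin n × Fin n) (Fin n × Fin n) ℂ) :
    tensorOne n (c • e) = c • tensorOne n e := by
  ext x y
  simp [tensorOne_apply, mul_assoc]

lemma oneTensor_smul (n : ℕ) (c : ℂ) (f : Matrix (Fin n × Fin n) (Fin n × Fin n) ℂ) :
    oneTensor n (c • f) = c • oneTensor n f := by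
  ext x y
  simp [oneTensor_apply]

/-- If `Q` is positive definite with `Tr(Q²) = Tr(Q⁻²) = λ^(-1/2)`, and `e`, `f` are the
orthogonal projections of `ℂⁿ ⊗ ℂⁿ` onto `ℂ·vec Q` and `ℂ·vec((Q⁻¹)ᵗ)` respectively, then
the Temperley–Lieb–Jones relations
`(e ⊗ id)(id ⊗ f)(e ⊗ id) = λ (e ⊗ id)` and `(id ⊗ f)(e ⊗ id)(id ⊗ f) = λ (id ⊗ f)` hold. -/
theorem stmt12 (n : ℕ) (hn : 0 < n) (lam : ℝ) (hlam : 0 < lam)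
    (Q : Matrix (Fin n) (Fin n) ℂ) (hQ : Q.PosDef)
    (hTr : Matrix.trace (Q ^ 2) = ((lam ^ (-(1 : ℝ) / 2) : ℝ) : ℂ))
    (hTrInv : Matrix.trace (Q⁻¹ ^ 2) = ((lam ^ (-(1 : ℝ) / 2) : ℝ) : ℂ)) :
    tensorOne n (lineProj fun p => Q p.1 p.2) *
          oneTensor n (lineProj fun p => (Q⁻¹)ᵀ p.1 p.2) *
          tensorOne n (lineProj fun p => Q p.1 p.2) =
        (lam : ℂ) • tensorOne n (lineProj fun p => Q p.1 p.2) ∧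
      oneTensor n (lineProj fun p => (Q⁻¹)ᵀ p.1 p.2) *
          tensorOne n (lineProj fun p => Q p.1 p.2) *
          oneTensor n (lineProj fun p => (Q⁻¹)ᵀ p.1 p.2) =
        (lam : ℂ) • oneTensor n (lineProj fun p => (Q⁻¹)ᵀ p.1 p.2) := by
  have hH : ∀ i j, star (Q i j) = Q j i := fun i j => hQ.isHermitian.apply j i
  have hHinv : ∀ i j, star (Q⁻¹ i j) = Q⁻¹ j i := fun i j => hQ.isHermitian.inv.apply j i
  have hdet : IsUnit Q.det := (Matrix.isUnit_iff_isUnit_det Q).mp hQ.isUnit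
  have hQinvQ : Q⁻¹ * Q = 1 := Matrix.nonsing_inv_mul Q hdet
  have hQQinv : Q * Q⁻¹ = 1 := Matrix.mul_nonsing_inv Q hdet
  -- key sums
  have k1 : ∀ c s : Fin n, (∑ q, star (Q s q) * (Q⁻¹)ᵀ q c) = if c = s then 1 else 0 := by
    intro c s
    have : (∑ q, star (Q s q) * (Q⁻¹)ᵀ q c) = (Q⁻¹ * Q) c s := by
      rw [Matrix.mul_apply]
      exact Finset.sum_congr rfl fun q _ => by rw [hH, Matrix.transpose_apply]; ring
    rw [this, hQinvQ, Matrix.one_apply]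
  have k2 : ∀ c c'' : Fin n, (∑ t, Q c t * star ((Q⁻¹)ᵀ t c'')) = if c = c'' then 1 else 0 := by
    intro c c''
    have : (∑ t, Q c t * star ((Q⁻¹)ᵀ t c'')) = (Q * Q⁻¹) c c'' := by
      rw [Matrix.mul_apply]
      exact Finset.sum_congr rfl fun t _ => by rw [Matrix.transpose_apply, hHinv]
    rw [this, hQQinv, Matrix.one_apply]
  -- unscaled matrices
  set A : Matrix (Fin n × Fin n) (Fin n × Fin n) ℂ :=
    Matrix.of fun p q => Q p.1 p.2 * star (Q q.1 q.2) with hA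
  set B : Matrix (Fin n × Fin n) (Fin n × Fin n) ℂ :=
    Matrix.of fun p q => (Q⁻¹)ᵀ p.1 p.2 * star ((Q⁻¹)ᵀ q.1 q.2) with hB
  -- stage products
  have stage1 : tensorOne n A * oneTensor n B =
      Matrix.of fun x y => (if x.2.2 = y.1 then 1 else 0) * Q x.1 x.2.1 * star ((Q⁻¹)ᵀ y.2.1 y.2.2) := by
    ext ⟨a, b, c⟩ ⟨s, t, u⟩
    rw [Matrix.mul_apply]
    rw [Fintype.sum_prod_type]
    simp only [tensorOne_apply, oneTensor_apply, hA, hB, Matrix.of_apply]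
    simp only [Fintype.sum_prod_type, mul_ite, ite_mul, mul_zero, zero_mul, mul_one, one_mul, Finset.sum_ite_irrel, Finset.sum_const_zero,
      Finset.sum_ite_eq, Finset.sum_ite_eq', Finset.mem_univ, if_true]
    have h : (∑ x, Q a b * star (Q s x) * ((Q⁻¹)ᵀ x c * star ((Q⁻¹)ᵀ t u)))
        = (∑ x, star (Q s x) * (Q⁻¹)ᵀ x c) * (Q a b * star ((Q⁻¹)ᵀ t u)) := by
      rw [Finset.sum_mul]; exact Finset.sum_congr rfl fun x _ => by ring
    rw [h, k1]
    split <;> ring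
  have un1 : tensorOne n A * oneTensor n B * tensorOne n A = tensorOne n A := by
    rw [stage1]
    ext ⟨a, b, c⟩ ⟨a'', b'', c''⟩
    rw [Matrix.mul_apply]
    simp only [Fintype.sum_prod_type, tensorOne_apply, Matrix.of_apply, hA,
      mul_ite, ite_mul, mul_zero, zero_mul, mul_one, one_mul, Finset.sum_ite_irrel,
      Finset.sum_const_zero, Finset.sum_ite_eq, Finset.sum_ite_eq', Finset.mem_univ, if_true]
    have h : (∑ x, Q a b * star ((Q⁻¹)ᵀ x c'') * (Q c x * star (Q a'' b'')))
        = (∑ x, Q c x * star ((Q⁻¹)ᵀ x c'')) * (Q a b * star (Q a'' b'')) := by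
      rw [Finset.sum_mul]; exact Finset.sum_congr rfl fun x _ => by ring
    rw [h, k2]
    split <;> ring
  -- second relation, unscaled
  have stage1' : oneTensor n B * tensorOne n A =
      Matrix.of fun x y => (if x.1 = y.2.2 then 1 else 0) * (Q⁻¹)ᵀ x.2.1 x.2.2 * star (Q y.1 y.2.1) := by
    ext ⟨a, b, c⟩ ⟨s, t, u⟩
    rw [Matrix.mul_apply]
    simp only [Fintype.sum_prod_type, tensorOne_apply, oneTensor_apply, Matrix.of_apply, hA, hB,
      mul_ite, ite_mul, mul_zero, zero_mul, mul_one, one_mul, Finset.sum_ite_irrel,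
      Finset.sum_const_zero, Finset.sum_ite_eq, Finset.sum_ite_eq', Finset.mem_univ, if_true]
    have h : (∑ x, (Q⁻¹)ᵀ b c * star ((Q⁻¹)ᵀ x u) * (Q a x * star (Q s t)))
        = (∑ x, Q a x * star ((Q⁻¹)ᵀ x u)) * ((Q⁻¹)ᵀ b c * star (Q s t)) := by
      rw [Finset.sum_mul]; exact Finset.sum_congr rfl fun x _ => by ring
    rw [h, k2]
    split <;> ring
  have un2 : oneTensor n B * tensorOne n A * oneTensor n B = oneTensor n B := by
    rw [stage1']
    ext ⟨a, b, c⟩ ⟨a'', b'', c''⟩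
    rw [Matrix.mul_apply]
    simp only [Fintype.sum_prod_type, oneTensor_apply, Matrix.of_apply, hB,
      mul_ite, ite_mul, mul_zero, zero_mul, mul_one, one_mul, Finset.sum_ite_irrel,
      Finset.sum_const_zero, Finset.sum_ite_eq, Finset.sum_ite_eq', Finset.mem_univ, if_true]
    have h : (∑ x, (Q⁻¹)ᵀ b c * star (Q a'' x) * ((Q⁻¹)ᵀ x a * star ((Q⁻¹)ᵀ b'' c'')))
        = (∑ x, star (Q a'' x) * (Q⁻¹)ᵀ x a) * ((Q⁻¹)ᵀ b c * star ((Q⁻¹)ᵀ b'' c'')) := by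
      rw [Finset.sum_mul]; exact Finset.sum_congr rfl fun x _ => by ring
    rw [h, k1]
    split <;> ring
  -- scalars
  set μ : ℂ := ((lam ^ (-(1 : ℝ) / 2) : ℝ) : ℂ) with hμdef
  have hc : (∑ p : Fin n × Fin n, Q p.1 p.2 * star (Q p.1 p.2)) = Matrix.trace (Q ^ 2) := by
    rw [pow_two, Matrix.trace, Fintype.sum_prod_type]
    refine Finset.sum_congr rfl fun i _ => ?_
    rw [Matrix.diag_apply, Matrix.mul_apply]
    exact Finset.sum_congr rfl fun j _ => by rw [hH]
  have hd : (∑ p : Fin n × Fin n, (Q⁻¹)ᵀ p.1 p.2 * star ((Q⁻¹)ᵀ p.1 p.2))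
      = Matrix.trace (Q⁻¹ ^ 2) := by
    rw [pow_two, Matrix.trace, Fintype.sum_prod_type]
    refine Finset.sum_congr rfl fun i _ => ?_
    rw [Matrix.diag_apply, Matrix.mul_apply]
    refine Finset.sum_congr rfl fun j _ => ?_
    simp only [Matrix.transpose_apply, hHinv]
    exact mul_comm _ _
  have hE : (lineProj fun p : Fin n × Fin n => Q p.1 p.2) = μ⁻¹ • A := by
    simp only [lineProj]
    rw [show (∑ p : Fin n × Fin n, Q p.1 p.2 * star (Q p.1 p.2)) = μ from hc.trans hTr]
  have hF : (lineProj fun p : Fin n × Fin n => (Q⁻¹)ᵀ p.1 p.2) = μ⁻¹ • B := by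
    simp only [lineProj]
    rw [show (∑ p : Fin n × Fin n, (Q⁻¹)ᵀ p.1 p.2 * star ((Q⁻¹)ᵀ p.1 p.2)) = μ from
      hd.trans hTrInv]
  have hμμ : μ⁻¹ * μ⁻¹ = (lam : ℂ) := by
    have hr : (lam ^ (-(1 : ℝ) / 2) : ℝ) * (lam ^ (-(1 : ℝ) / 2) : ℝ) = lam⁻¹ := by
      rw [← Real.rpow_add hlam]
      norm_num [Real.rpow_neg_one]
    have : μ * μ = (lam : ℂ)⁻¹ := by
      rw [hμdef, ← Complex.ofReal_mul, hr, Complex.ofReal_inv]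
    rw [← mul_inv, this, inv_inv]
  rw [hE, hF, tensorOne_smul, oneTensor_smul]
  constructor
  · simp only [smul_mul_assoc, mul_smul_comm, smul_smul]
    rw [un1]
    congr 1
    rw [← hμμ]
    ring
  · simp only [smul_mul_assoc, mul_smul_comm, smul_smul]
    rw [un2]
    congr 1
    rw [← hμμ]
    ring
end
end
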